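/- Let D be a binary q-Steiner triple system S_2[2,3,v] and let A in GL(v, F_2) be an automorphism of D of order 2 that is conjugate in GL(v, F_2) to A_{v,s}. Then the number of blocks B of D with B·A = B that contain exactly 3 one-dimensional subspaces P with P·A = P equals 2^{v−s−2}·(2^s − 1). -/
import Mathlib


/-- The space `F_2^v` of binary row vectors of length `v`. -/
abbrev BinVec (v : ℕ) := Fin v → ZMod 2

/-- The image `U·A` of a subspace `U` of `F_2^v` under the linear map `x ↦ x·A`
given by the matrix `A`. -/
def subApply (v : ℕ) (A : Matrix (Fin v) (Fin v) (ZMod 2))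
    (U : Submodule (ZMod 2) (BinVec v)) : Submodule (ZMod 2) (BinVec v) :=
  U.map (Matrix.vecMulLinear A)

/-- A binary `q`-Steiner triple system `S_2[2,3,v]`: a set of `3`-dimensional
subspaces (blocks) of `F_2^v` such that every `2`-dimensional subspace is
contained in exactly one block. -/
def IsSteinerTriple (v : ℕ) (D : Set (Submodule (ZMod 2) (BinVec v))) : Prop :=
  (∀ B ∈ D, Module.finrank (ZMod 2) B = 3) ∧
  ∀ T : Submodule (ZMod 2) (BinVec v), Module.finrank (ZMod 2) T = 2 →
    ∃! B, B ∈ D ∧ T ≤ B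

/-- The matrix `A` is an automorphism of `D`: `U ↦ U·A` maps `D` onto itself. -/
def IsAutM (v : ℕ) (A : Matrix (Fin v) (Fin v) (ZMod 2))
    (D : Set (Submodule (ZMod 2) (BinVec v))) : Prop :=
  subApply v A '' D = D

lemma subApply_one (v : ℕ) (U : Submodule (ZMod 2) (BinVec v)) :
    subApply v 1 U = U := by
  have h : Matrix.vecMulLinear (1 : Matrix (Fin v) (Fin v) (ZMod 2)) = LinearMap.id := by
    refine LinearMap.ext fun x => ?_
    simp [Matrix.vecMulLinear_apply]
  simp [subApply, h]

lemma subApply_mul (v : ℕ) (A B : Matrix (Fin v) (Fin v) (ZMod 2))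
    (U : Submodule (ZMod 2) (BinVec v)) :
    subApply v (A * B) U = subApply v B (subApply v A U) := by
  have h : Matrix.vecMulLinear (A * B) =
      (Matrix.vecMulLinear B).comp (Matrix.vecMulLinear A) := LinearMap.ext fun x => by
    simp only [Matrix.vecMulLinear_apply, LinearMap.coe_comp, Function.comp_apply]
    exact (Matrix.vecMul_vecMul x A B).symm
  rw [subApply, h, Submodule.map_comp]
  rfl

lemma subApply_comp (v : ℕ) (A B : Matrix (Fin v) (Fin v) (ZMod 2)) :
    (subApply v B) ∘ (subApply v A) = subApply v (A * B) :=
  funext fun U => (subApply_mul v A B U).symm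

/-- The automorphism group of `D`, as a subgroup of `GL(v, F_2)`. -/
def Aut (v : ℕ) (D : Set (Submodule (ZMod 2) (BinVec v))) :
    Subgroup (GL (Fin v) (ZMod 2)) where
  carrier := {A | IsAutM v A.val D}
  one_mem' := by
    show subApply v (1 : GL (Fin v) (ZMod 2)).val '' D = D
    rw [show (1 : GL (Fin v) (ZMod 2)).val = 1 from rfl]
    rw [show subApply v (1 : Matrix (Fin v) (Fin v) (ZMod 2)) = id from
      funext (subApply_one v), Set.image_id]
  mul_mem' := by
    intro A B hA hB
    show subApply v (A * B : GL (Fin v) (ZMod 2)).val '' D = D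
    rw [show (A * B : GL (Fin v) (ZMod 2)).val = A.val * B.val from rfl]
    rw [← subApply_comp, Set.image_comp]
    rw [show subApply v A.val '' D = D from hA]
    exact hB
  inv_mem' := by
    intro A hA
    show subApply v (A⁻¹ : GL (Fin v) (ZMod 2)).val '' D = D
    conv_lhs => rw [← show subApply v A.val '' D = D from hA]
    rw [← Set.image_comp, subApply_comp]
    rw [show A.val * (A⁻¹ : GL (Fin v) (ZMod 2)).val = 1 from A.mul_inv]
    rw [show subApply v (1 : Matrix (Fin v) (Fin v) (ZMod 2)) = id from
      funext (subApply_one v), Set.image_id]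

/-- `pairSwap s i` swaps `2m ↔ 2m+1` for `i < 2s` and fixes `i` otherwise. -/
def pairSwap (s i : ℕ) : ℕ :=
  if i < 2 * s then (if i % 2 = 0 then i + 1 else i - 1) else i

/-- The block diagonal matrix `A_{v,s}`: `s` consecutive blocks `[[0,1],[1,0]]`
on the diagonal, followed by a `(v-2s)×(v-2s)` identity matrix. -/
def Avs (v s : ℕ) : Matrix (Fin v) (Fin v) (ZMod 2) :=
  Matrix.of fun i j => if (j : ℕ) = pairSwap s (i : ℕ) then 1 else 0

/-- `M` and `N` are conjugate in `GL(v, F_2)`. -/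
def ConjGL (v : ℕ) (M N : Matrix (Fin v) (Fin v) (ZMod 2)) : Prop :=
  ∃ P : GL (Fin v) (ZMod 2), M = P.val * N * (P⁻¹).val

/-- The orbit of a subspace `P` under the subgroup generated by `A`. -/
def orbitOf (v : ℕ) (A : GL (Fin v) (ZMod 2)) (P : Submodule (ZMod 2) (BinVec v)) :
    Set (Submodule (ZMod 2) (BinVec v)) :=
  {Q | ∃ g ∈ Subgroup.zpowers A, Q = subApply v (g : GL (Fin v) (ZMod 2)).val P}

/-- The block diagonal matrix consisting of the 3×3 upper-triangular Jordan block
(1s on diagonal and superdiagonal) followed by the 4×4 upper-triangular Jordan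
block (1s on diagonal and superdiagonal). -/
def JordanJ3J4 : Matrix (Fin 7) (Fin 7) (ZMod 2) :=
  Matrix.of fun i j =>
    if j = i then 1 else if (j : ℕ) = (i : ℕ) + 1 ∧ (i : ℕ) ≠ 2 then 1 else 0

/-- The block diagonal matrix consisting of `k` consecutive 2×2 blocks
`[[0,1],[1,1]]` on the diagonal, followed by a `(v-2k)×(v-2k)` identity matrix. -/
def Bvk (v k : ℕ) : Matrix (Fin v) (Fin v) (ZMod 2) :=
  Matrix.of fun i j =>
    if (i : ℕ) < 2 * k then
      (if (i : ℕ) % 2 = 0 then (if (j : ℕ) = (i : ℕ) + 1 then 1 else 0)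
       else (if (j : ℕ) = (i : ℕ) - 1 ∨ (j : ℕ) = (i : ℕ) then 1 else 0))
    else if i = j then 1 else 0


section Stmt6Aux

open Module

private lemma zmod2_cases (a : ZMod 2) : a = 0 ∨ a = 1 := by revert a; decide

private lemma zmod2_add_self (a : ZMod 2) : a + a = 0 := by revert a; decide

private lemma zmod2_add_eq_zero (a b : ZMod 2) (h : a + b = 0) : a = b := by
  revert a b; decide

private lemma bv_add_self {v : ℕ} (x : BinVec v) : x + x = 0 := by
  funext j
  exact zmod2_add_self (x j)

private lemma bv_neg {v : ℕ} (x : BinVec v) : -x = x :=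
  neg_eq_of_add_eq_zero_left (bv_add_self x)

private lemma pairSwap_eval_even (s i : ℕ) (h1 : i < 2*s) (h2 : i % 2 = 0) :
    pairSwap s i = i + 1 := by
  unfold pairSwap; rw [if_pos h1, if_pos h2]

private lemma pairSwap_eval_odd (s i : ℕ) (h1 : i < 2*s) (h2 : i % 2 = 1) :
    pairSwap s i = i - 1 := by
  unfold pairSwap; rw [if_pos h1, if_neg (by omega)]

private lemma pairSwap_eval_ge (s i : ℕ) (h1 : 2*s ≤ i) : pairSwap s i = i := by
  unfold pairSwap; rw [if_neg (by omega)]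

private lemma pairSwap_lt {v s : ℕ} (h : 2*s ≤ v) {i : ℕ} (hi : i < v) :
    pairSwap s i < v := by
  unfold pairSwap
  split
  · split <;> omega
  · omega

private lemma pairSwap_invol (s i : ℕ) : pairSwap s (pairSwap s i) = i := by
  rcases Nat.lt_or_ge i (2*s) with h1 | h1
  · rcases Nat.even_or_odd i with ⟨k, hk⟩ | ⟨k, hk⟩
    · rw [pairSwap_eval_even s i h1 (by omega),
        pairSwap_eval_odd s (i+1) (by omega) (by omega)]
      omega
    · rw [pairSwap_eval_odd s i h1 (by omega),
        pairSwap_eval_even s (i-1) (by omega) (by omega)]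
      omega
  · rw [pairSwap_eval_ge s i h1, pairSwap_eval_ge s i h1]

private lemma vecMul_avs {v s : ℕ} (h : 2*s ≤ v) (x : BinVec v) (j : Fin v) :
    Matrix.vecMul x (Avs v s) j = x ⟨pairSwap s (j : ℕ), pairSwap_lt h j.2⟩ := by
  have key : ∀ i : Fin v, ((j : ℕ) = pairSwap s (i : ℕ)) =
      (i = (⟨pairSwap s (j : ℕ), pairSwap_lt h j.2⟩ : Fin v)) := by
    intro i
    apply propext
    constructor
    · intro hh
      apply Fin.ext
      show (i : ℕ) = pairSwap s (j : ℕ)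
      rw [hh, pairSwap_invol]
    · rintro rfl
      show (j : ℕ) = pairSwap s (pairSwap s (j : ℕ))
      rw [pairSwap_invol]
  show dotProduct x (fun i => Avs v s i j) = _
  simp only [dotProduct, Avs, Matrix.of_apply, mul_ite, mul_one, mul_zero, key]
  simp

/-- The fixed subspace of the linear map `x ↦ x·M`. -/
private def fixM (v : ℕ) (M : Matrix (Fin v) (Fin v) (ZMod 2)) :
    Submodule (ZMod 2) (BinVec v) :=
  LinearMap.ker (Matrix.vecMulLinear M - LinearMap.id)

private lemma mem_fixM {v : ℕ} {M : Matrix (Fin v) (Fin v) (ZMod 2)} {x : BinVec v} :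
    x ∈ fixM v M ↔ Matrix.vecMul x M = x := by
  simp [fixM, LinearMap.mem_ker, sub_eq_zero, Matrix.vecMulLinear_apply]

/-- The linear map recording the differences `x_{2m} - x_{2m+1}`. -/
private def rho (v s : ℕ) (h : 2*s ≤ v) : BinVec v →ₗ[ZMod 2] (Fin s → ZMod 2) where
  toFun x := fun m => x ⟨2*(m : ℕ), by have := m.2; omega⟩ + x ⟨2*(m : ℕ)+1, by have := m.2; omega⟩
  map_add' x y := by funext m; simp [Pi.add_apply]; ring
  map_smul' c x := by funext m; simp [Pi.smul_apply, smul_eq_mul]; ring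

private lemma rho_surj {v s : ℕ} (h : 2*s ≤ v) : Function.Surjective (rho v s h) := by
  intro c
  refine ⟨fun j => if hj : (j : ℕ) % 2 = 1 ∧ (j : ℕ) < 2*s then c ⟨(j : ℕ)/2, by omega⟩ else 0, ?_⟩
  funext m
  show (if hj : (2*(m : ℕ)) % 2 = 1 ∧ 2*(m : ℕ) < 2*s then _ else 0)
      + (if hj : (2*(m : ℕ)+1) % 2 = 1 ∧ 2*(m : ℕ)+1 < 2*s then
          c ⟨(2*(m : ℕ)+1)/2, by omega⟩ else 0) = c m
  rw [dif_neg (by omega), dif_pos ⟨by omega, by have := m.2; omega⟩, zero_add]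
  congr 1
  apply Fin.ext
  show (2*(m : ℕ)+1)/2 = (m : ℕ)
  omega

private lemma fix_avs_eq_ker {v s : ℕ} (h : 2*s ≤ v) :
    fixM v (Avs v s) = LinearMap.ker (rho v s h) := by
  ext x
  rw [mem_fixM, LinearMap.mem_ker]
  constructor
  · intro hx
    funext m
    have hm2 : 2*(m : ℕ)+1 < v := by have := m.2; omega
    have h1 := congrFun hx ⟨2*(m : ℕ)+1, hm2⟩
    rw [vecMul_avs h] at h1
    have h2 : (⟨pairSwap s (2*(m : ℕ)+1), pairSwap_lt h hm2⟩ : Fin v)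
        = ⟨2*(m : ℕ), by omega⟩ := by
      apply Fin.ext
      show pairSwap s (2*(m : ℕ)+1) = 2*(m : ℕ)
      rw [pairSwap_eval_odd s _ (by have := m.2; omega) (by omega)]
      omega
    rw [h2] at h1
    show x ⟨2*(m : ℕ), by omega⟩ + x ⟨2*(m : ℕ)+1, hm2⟩ = 0
    rw [h1]
    exact zmod2_add_self _
  · intro hx
    funext j
    rw [vecMul_avs h]
    rcases Nat.lt_or_ge (j : ℕ) (2*s) with h1 | h1
    · rcases Nat.even_or_odd (j : ℕ) with ⟨k, hk⟩ | ⟨k, hk⟩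
      · have hm := congrFun hx ⟨k, by omega⟩
        have hm' : x ⟨2*k, by omega⟩ + x ⟨2*k+1, by omega⟩ = 0 := hm
        have hx2 : x ⟨2*k, by omega⟩ = x ⟨2*k+1, by omega⟩ := zmod2_add_eq_zero _ _ hm'
        have e1 : (⟨pairSwap s (j : ℕ), pairSwap_lt h j.2⟩ : Fin v) = ⟨2*k+1, by omega⟩ := by
          apply Fin.ext
          show pairSwap s (j : ℕ) = 2*k+1
          rw [pairSwap_eval_even s _ h1 (by omega)]
          omega
        have e2 : j = (⟨2*k, by omega⟩ : Fin v) := by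
          apply Fin.ext
          show (j : ℕ) = 2*k
          omega
        rw [e1, ← hx2]
        exact (congrArg x e2).symm
      · have hm := congrFun hx ⟨k, by omega⟩
        have hm' : x ⟨2*k, by omega⟩ + x ⟨2*k+1, by omega⟩ = 0 := hm
        have hx2 : x ⟨2*k, by omega⟩ = x ⟨2*k+1, by omega⟩ := zmod2_add_eq_zero _ _ hm'
        have e1 : (⟨pairSwap s (j : ℕ), pairSwap_lt h j.2⟩ : Fin v) = ⟨2*k, by omega⟩ := by
          apply Fin.ext
          show pairSwap s (j : ℕ) = 2*k
          rw [pairSwap_eval_odd s _ h1 (by omega)]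
          omega
        have e2 : j = (⟨2*k+1, by omega⟩ : Fin v) := by
          apply Fin.ext
          show (j : ℕ) = 2*k+1
          omega
        rw [e1, hx2]
        exact (congrArg x e2).symm
    · exact congrArg x (Fin.ext (pairSwap_eval_ge s _ h1))

private lemma finrank_fix_avs {v s : ℕ} (h : 2*s ≤ v) :
    Module.finrank (ZMod 2) (fixM v (Avs v s)) = v - s := by
  have h1 := (rho v s h).finrank_range_add_finrank_ker
  rw [LinearMap.range_eq_top.mpr (rho_surj h), finrank_top] at h1
  rw [fix_avs_eq_ker h]
  have h2 : Module.finrank (ZMod 2) (Fin s → ZMod 2) = s := Module.finrank_fin_fun _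
  have h3 : Module.finrank (ZMod 2) (BinVec v) = v := Module.finrank_fin_fun _
  omega

end Stmt6Aux
section Stmt6Aux2

open Module

/-- Right multiplication by an invertible matrix, as a linear equivalence. -/
private def glEquiv (v : ℕ) (P : GL (Fin v) (ZMod 2)) : BinVec v ≃ₗ[ZMod 2] BinVec v :=
  LinearEquiv.ofLinear (Matrix.vecMulLinear P.val) (Matrix.vecMulLinear (P⁻¹).val)
    (by
      refine LinearMap.ext fun x => ?_
      simp only [LinearMap.coe_comp, Function.comp_apply, Matrix.vecMulLinear_apply,
        LinearMap.id_apply]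
      rw [Matrix.vecMul_vecMul]
      have h1 : (P⁻¹).val * P.val = 1 := by
        rw [← Units.val_mul, inv_mul_cancel]; rfl
      rw [h1, Matrix.vecMul_one])
    (by
      refine LinearMap.ext fun x => ?_
      simp only [LinearMap.coe_comp, Function.comp_apply, Matrix.vecMulLinear_apply,
        LinearMap.id_apply]
      rw [Matrix.vecMul_vecMul]
      have h1 : P.val * (P⁻¹).val = 1 := by
        rw [← Units.val_mul, mul_inv_cancel]; rfl
      rw [h1, Matrix.vecMul_one])

private lemma glEquiv_apply {v : ℕ} (P : GL (Fin v) (ZMod 2)) (x : BinVec v) :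
    glEquiv v P x = Matrix.vecMul x P.val := rfl

private lemma finrank_fixM_conj {v : ℕ} {M N : Matrix (Fin v) (Fin v) (ZMod 2)}
    (P : GL (Fin v) (ZMod 2)) (hP : M = P.val * N * (P⁻¹).val) :
    Module.finrank (ZMod 2) (fixM v M) = Module.finrank (ZMod 2) (fixM v N) := by
  have hcomap : fixM v M = Submodule.comap ((glEquiv v P) : BinVec v →ₗ[ZMod 2] BinVec v)
      (fixM v N) := by
    ext x
    rw [mem_fixM, Submodule.mem_comap]
    have hg : ((glEquiv v P) : BinVec v →ₗ[ZMod 2] BinVec v) x = Matrix.vecMul x P.val := rfl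
    rw [hg, mem_fixM]
    have hPP : (P⁻¹).val * P.val = 1 := by rw [← Units.val_mul, inv_mul_cancel]; rfl
    have hPP' : P.val * (P⁻¹).val = 1 := by rw [← Units.val_mul, mul_inv_cancel]; rfl
    constructor
    · intro hx
      have h2 : Matrix.vecMul (Matrix.vecMul x M) P.val = Matrix.vecMul x P.val := by rw [hx]
      rw [hP, Matrix.vecMul_vecMul, mul_assoc, hPP, mul_one] at h2
      rw [Matrix.vecMul_vecMul]
      exact h2
    · intro hx
      rw [hP, ← Matrix.vecMul_vecMul, ← Matrix.vecMul_vecMul, hx, Matrix.vecMul_vecMul, hPP',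
        Matrix.vecMul_one]
  have hmap : Submodule.map ((glEquiv v P) : BinVec v →ₗ[ZMod 2] BinVec v) (fixM v M)
      = fixM v N := by
    rw [hcomap]
    exact Submodule.map_comap_eq_of_surjective (glEquiv v P).surjective _
  calc Module.finrank (ZMod 2) (fixM v M)
      = Module.finrank (ZMod 2) (Submodule.map ((glEquiv v P) : BinVec v →ₗ[ZMod 2] BinVec v)
          (fixM v M)) := ((glEquiv v P).submoduleMap (fixM v M)).finrank_eq
    _ = Module.finrank (ZMod 2) (fixM v N) := by rw [hmap]

/-- Cardinality of the set of nonzero vectors of a submodule. -/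
private lemma card_nonzero {v : ℕ} (W : Submodule (ZMod 2) (BinVec v)) :
    Nat.card {y : W // y ≠ 0} = 2 ^ Module.finrank (ZMod 2) W - 1 := by
  classical
  have i1 : Fintype W := Fintype.ofFinite W
  have i2 : Fintype {y : W // ¬ y = 0} := Fintype.ofFinite _
  have i3 : Fintype {y : W // y = 0} := Fintype.ofFinite _
  have hW : Fintype.card W = 2 ^ Module.finrank (ZMod 2) W := by
    rw [card_eq_pow_finrank (K := ZMod 2) (V := W), ZMod.card]
  have h1 : Fintype.card {y : W // ¬ y = 0} =
      Fintype.card W - Fintype.card {y : W // y = 0} := Fintype.card_subtype_compl _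
  have h2 : Fintype.card {y : W // y = 0} = 1 := Fintype.card_subtype_eq (0 : W)
  rw [Nat.card_eq_fintype_card (α := {y : W // y ≠ 0})]
  show Fintype.card {y : W // ¬ y = 0} = _
  rw [h1, h2, hW]

end Stmt6Aux2
section Stmt6Aux3

open Module

private lemma hLL_of {v : ℕ} {M : Matrix (Fin v) (Fin v) (ZMod 2)} (hM2 : M * M = 1)
    (x : BinVec v) : Matrix.vecMulLinear M (Matrix.vecMulLinear M x) = x := by
  simp only [Matrix.vecMulLinear_apply]
  rw [Matrix.vecMul_vecMul, hM2, Matrix.vecMul_one]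

private lemma hLinj_of {v : ℕ} {M : Matrix (Fin v) (Fin v) (ZMod 2)} (hM2 : M * M = 1) :
    Function.Injective (Matrix.vecMulLinear M) := by
  intro x y hxy
  rw [← hLL_of hM2 x, hxy, hLL_of hM2 y]

/-- Fixed one-dimensional subspaces contained in `B` correspond to
nonzero fixed vectors of `B`. -/
private lemma card_lines {v : ℕ} (M : Matrix (Fin v) (Fin v) (ZMod 2))
    (hM2 : M * M = 1) (B : Submodule (ZMod 2) (BinVec v)) :
    Nat.card {P : Submodule (ZMod 2) (BinVec v) //
        Module.finrank (ZMod 2) P = 1 ∧ P ≤ B ∧ subApply v M P = P}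
      = 2 ^ Module.finrank (ZMod 2) ↥(B ⊓ fixM v M) - 1 := by
  classical
  rw [← card_nonzero]
  apply Nat.card_congr
  have hfixv : ∀ y : ↥(B ⊓ fixM v M), Matrix.vecMulLinear M (y : BinVec v) = (y : BinVec v) := by
    intro y
    have hy := (Submodule.mem_inf.mp y.2).2
    rw [mem_fixM] at hy
    rw [Matrix.vecMulLinear_apply, hy]
  let f : {y : ↥(B ⊓ fixM v M) // y ≠ 0} → {P : Submodule (ZMod 2) (BinVec v) //
      Module.finrank (ZMod 2) P = 1 ∧ P ≤ B ∧ subApply v M P = P} := fun y =>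
    ⟨Submodule.span (ZMod 2) {(y.1 : BinVec v)},
      finrank_span_singleton (by simpa using y.2),
      by
        rw [Submodule.span_le, Set.singleton_subset_iff]
        exact (Submodule.mem_inf.mp y.1.2).1,
      by
        show Submodule.map (Matrix.vecMulLinear M) _ = _
        rw [Submodule.map_span, Set.image_singleton, hfixv y.1]⟩
  refine (Equiv.ofBijective f ⟨?_, ?_⟩).symm
  · -- injective
    intro y z hyz
    have h1 : Submodule.span (ZMod 2) {(y.1 : BinVec v)}
        = Submodule.span (ZMod 2) {(z.1 : BinVec v)} := congrArg Subtype.val hyz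
    have h2 : (y.1 : BinVec v) ∈ Submodule.span (ZMod 2) {(z.1 : BinVec v)} := by
      rw [← h1]; exact Submodule.mem_span_singleton_self _
    rw [Submodule.mem_span_singleton] at h2
    obtain ⟨a, ha⟩ := h2
    rcases zmod2_cases a with rfl | rfl
    · exfalso
      apply y.2
      apply Subtype.ext
      show (y.1 : BinVec v) = 0
      rw [← ha, zero_smul]
    · rw [one_smul] at ha
      apply Subtype.ext
      apply Subtype.ext
      exact ha.symm
  · -- surjective
    rintro ⟨P, h1, hle, hfixP⟩
    have hPbot : P ≠ ⊥ := by
      intro hP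
      rw [hP, finrank_bot] at h1
      omega
    obtain ⟨x, hxP, hx0⟩ := Submodule.exists_mem_ne_zero_of_ne_bot hPbot
    have hspan : Submodule.span (ZMod 2) {x} = P := by
      apply Submodule.eq_of_le_of_finrank_eq
      · rw [Submodule.span_le, Set.singleton_subset_iff]; exact hxP
      · rw [finrank_span_singleton hx0, h1]
    have hLx : Matrix.vecMulLinear M x = x := by
      have hmem : Matrix.vecMulLinear M x ∈ P := by
        have : Matrix.vecMulLinear M x ∈ Submodule.map (Matrix.vecMulLinear M) P :=
          Submodule.mem_map_of_mem hxP
        rwa [show Submodule.map (Matrix.vecMulLinear M) P = P from hfixP] at this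
      rw [← hspan, Submodule.mem_span_singleton] at hmem
      obtain ⟨a, ha⟩ := hmem
      rcases zmod2_cases a with rfl | rfl
      · exfalso
        apply hx0
        apply hLinj_of hM2
        rw [← ha, zero_smul, map_zero]
      · rw [one_smul] at ha; exact ha.symm
    refine ⟨⟨⟨x, ?_⟩, ?_⟩, ?_⟩
    · exact Submodule.mem_inf.mpr ⟨hle hxP, mem_fixM.mpr (by
        rw [← Matrix.vecMulLinear_apply, hLx])⟩
    · simpa using hx0
    · apply Subtype.ext
      exact hspan

/-- A fixed block meets the fixed space in dimension at least 2. -/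
private lemma two_le_finrank_inter {v : ℕ} {M : Matrix (Fin v) (Fin v) (ZMod 2)}
    (hM2 : M * M = 1) {B : Submodule (ZMod 2) (BinVec v)}
    (hB3 : Module.finrank (ZMod 2) B = 3)
    (hfix : Submodule.map (Matrix.vecMulLinear M) B = B) :
    2 ≤ Module.finrank (ZMod 2) ↥(B ⊓ fixM v M) := by
  classical
  set L : BinVec v →ₗ[ZMod 2] BinVec v := Matrix.vecMulLinear M with hLdef
  have hmemL : ∀ x ∈ B, L x ∈ B := by
    intro x hx
    have : L x ∈ Submodule.map L B := Submodule.mem_map_of_mem hx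
    rwa [hfix] at this
  set g : ↥B →ₗ[ZMod 2] BinVec v := L ∘ₗ B.subtype - B.subtype with hgdef
  have hgb : ∀ b : ↥B, g b = L (b : BinVec v) - (b : BinVec v) := fun b => rfl
  have hrange : LinearMap.range g ≤ B ⊓ fixM v M := by
    rintro _ ⟨b, rfl⟩
    rw [hgb]
    refine Submodule.mem_inf.mpr ⟨?_, ?_⟩
    · exact sub_mem (hmemL _ b.2) b.2
    · rw [mem_fixM, ← Matrix.vecMulLinear_apply]
      show L (L (b : BinVec v) - (b : BinVec v)) = _
      rw [map_sub, hLL_of hM2]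
      rw [← neg_sub (L (b : BinVec v)) (b : BinVec v), bv_neg]
  have hkereq : LinearMap.ker g = Submodule.comap B.subtype (fixM v M) := by
    ext b
    rw [LinearMap.mem_ker, Submodule.mem_comap, hgb, sub_eq_zero]
    show L (b : BinVec v) = (b : BinVec v) ↔ _
    rw [mem_fixM, ← Matrix.vecMulLinear_apply]
    exact Iff.rfl
  have e1 : Module.finrank (ZMod 2) ↥(B ⊓ fixM v M)
      = Module.finrank (ZMod 2) ↥(Submodule.comap B.subtype (fixM v M)) := by
    rw [← Submodule.map_comap_subtype]
    exact Submodule.finrank_map_subtype_eq B _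
  rw [← hkereq] at e1
  have hrn := g.finrank_range_add_finrank_ker
  rw [hB3] at hrn
  have hle := Submodule.finrank_mono hrange
  omega

end Stmt6Aux3
section Stmt6Aux4

open Module

private lemma nat_card_compl_sub {α : Type} [Finite α] (p : α → Prop) :
    Nat.card {x : α // ¬ p x} = Nat.card α - Nat.card {x : α // p x} := by
  classical
  haveI := Fintype.ofFinite α
  haveI : Fintype {x // p x} := Fintype.ofFinite _
  haveI : Fintype {x // ¬ p x} := Fintype.ofFinite _
  rw [Nat.card_eq_fintype_card, Nat.card_eq_fintype_card, Nat.card_eq_fintype_card]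
  exact Fintype.card_subtype_compl p

private lemma nat_card_submodule {v : ℕ} (W : Submodule (ZMod 2) (BinVec v)) :
    Nat.card W = 2 ^ Module.finrank (ZMod 2) W := by
  haveI := Fintype.ofFinite W
  rw [Nat.card_eq_fintype_card, card_eq_pow_finrank (K := ZMod 2), ZMod.card]

end Stmt6Aux4
/-- the number of fixed blocks with exactly 3 fixed points. -/
theorem stmt6 (v s : ℕ) (hs1 : 1 ≤ s) (hs2 : s ≤ v / 2)
    (D : Set (Submodule (ZMod 2) (BinVec v))) (hD : IsSteinerTriple v D)
    (A : GL (Fin v) (ZMod 2)) (hAut : IsAutM v A.val D)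
    (hord : orderOf A = 2) (hconj : ConjGL v A.val (Avs v s)) :
    Nat.card {B : Submodule (ZMod 2) (BinVec v) // B ∈ D ∧ subApply v A.val B = B ∧
      Nat.card {P : Submodule (ZMod 2) (BinVec v) //
        Module.finrank (ZMod 2) P = 1 ∧ P ≤ B ∧ subApply v A.val P = P} = 3}
      = 2 ^ (v - s - 2) * (2 ^ s - 1) := by
  classical
  obtain ⟨P, hP⟩ := hconj
  have h2s : 2 * s ≤ v := by
    have := (Nat.le_div_iff_mul_le (by norm_num : 0 < 2)).mp hs2
    omega
  have hA2 : A * A = 1 := by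
    have h := pow_orderOf_eq_one A
    rw [hord, pow_two] at h
    exact h
  have hM2 : A.val * A.val = 1 := by
    have h := congrArg Units.val hA2
    rwa [Units.val_mul] at h
  set Mv : Matrix (Fin v) (Fin v) (ZMod 2) := A.val with hMv
  set L : BinVec v →ₗ[ZMod 2] BinVec v := Matrix.vecMulLinear Mv with hLdef
  have hLL : ∀ x, L (L x) = x := hLL_of hM2
  have hLinj : Function.Injective L := hLinj_of hM2
  -- v is at least 3
  have hv3 : 3 ≤ v := by
    by_contra hc
    have hv2 : v = 2 := by omega
    subst hv2
    obtain ⟨B, ⟨hBD, _⟩, _⟩ := hD.2 ⊤ (by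
      rw [finrank_top]
      exact Module.finrank_fin_fun _)
    have h3 := hD.1 B hBD
    have hle : Module.finrank (ZMod 2) B ≤ 2 := by
      have h := Submodule.finrank_le B
      rwa [show Module.finrank (ZMod 2) (BinVec 2) = 2 from Module.finrank_fin_fun _] at h
    omega
  have hvs2 : s + 2 ≤ v := by omega
  -- the fixed space has dimension v - s
  have hFrank : Module.finrank (ZMod 2) (fixM v Mv) = v - s := by
    rw [finrank_fixM_conj P hP]
    exact finrank_fix_avs h2s
  -- the image of a block under A is a block
  have hDmem_map : ∀ B ∈ D, Submodule.map L B ∈ D := by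
    intro B hB
    have h : subApply v Mv B ∈ subApply v Mv '' D := Set.mem_image_of_mem _ hB
    rwa [hAut] at h
  -- spans of x, L x for non-fixed x are 2-dimensional
  have hTrank : ∀ x : BinVec v, ¬ L x = x → Module.finrank (ZMod 2)
      (Submodule.span (ZMod 2) {x, L x}) = 2 := by
    intro x hx
    have hx0 : x ≠ 0 := by
      intro h; apply hx; rw [h, map_zero]
    have hLx0 : L x ≠ 0 := by
      intro h
      apply hx0
      apply hLinj
      rw [h, map_zero]
    have hli : LinearIndependent (ZMod 2) ![x, L x] := by
      rw [LinearIndependent.pair_iff]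
      intro a b hab
      rcases zmod2_cases a with rfl | rfl <;> rcases zmod2_cases b with rfl | rfl
      · exact ⟨rfl, rfl⟩
      · exact absurd (by simpa using hab) hLx0
      · exact absurd (by simpa using hab) hx0
      · exfalso
        apply hx
        have h1 : x + L x = 0 := by simpa using hab
        calc L x = (x + x) + L x := by rw [bv_add_self, zero_add]
          _ = x + (x + L x) := by rw [add_assoc]
          _ = x := by rw [h1, add_zero]
    have hr := finrank_span_eq_card (R := ZMod 2) hli
    rw [Matrix.range_cons_cons_empty] at hr
    simpa using hr
  -- such spans are invariant
  have hTinv : ∀ x : BinVec v, Submodule.map L (Submodule.span (ZMod 2) {x, L x})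
      = Submodule.span (ZMod 2) {x, L x} := by
    intro x
    rw [Submodule.map_span, Set.image_insert_eq, Set.image_singleton, hLL]
    congr 1
    exact Set.pair_comm _ _
  -- choose the block through each such span
  have hEx : ∀ x : {x : BinVec v // ¬ L x = x}, ∃ B, (B ∈ D ∧
      Submodule.span (ZMod 2) {x.1, L x.1} ≤ B) ∧ ∀ y, (y ∈ D ∧
      Submodule.span (ZMod 2) {x.1, L x.1} ≤ y) → y = B :=
    fun x => hD.2 (Submodule.span (ZMod 2) {x.1, L x.1}) (hTrank x.1 x.2)
  choose Bl hBl using hEx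
  have hBlfix : ∀ x : {x : BinVec v // ¬ L x = x}, Submodule.map L (Bl x) = Bl x := by
    intro x
    apply (hBl x).2
    constructor
    · exact hDmem_map _ (hBl x).1.1
    · calc Submodule.span (ZMod 2) {x.1, L x.1}
          = Submodule.map L (Submodule.span (ZMod 2) {x.1, L x.1}) := (hTinv x.1).symm
        _ ≤ Submodule.map L (Bl x) := Submodule.map_mono (hBl x).1.2
  have hxBl : ∀ x : {x : BinVec v // ¬ L x = x}, x.1 ∈ Bl x := fun x =>
    (hBl x).1.2 (Submodule.subset_span (Set.mem_insert _ _))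
  have hBl3 : ∀ x : {x : BinVec v // ¬ L x = x},
      Module.finrank (ZMod 2) (Bl x) = 3 := fun x => hD.1 _ (hBl x).1.1
  have hBlinter : ∀ x : {x : BinVec v // ¬ L x = x},
      Module.finrank (ZMod 2) ↥(Bl x ⊓ fixM v Mv) = 2 := by
    intro x
    have hge := two_le_finrank_inter hM2 (hBl3 x) (hBlfix x)
    have hle : Module.finrank (ZMod 2) ↥(Bl x ⊓ fixM v Mv) ≤ 3 := by
      have h := Submodule.finrank_mono (inf_le_left : Bl x ⊓ fixM v Mv ≤ Bl x)
      rwa [hBl3 x] at h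
    have hne : Module.finrank (ZMod 2) ↥(Bl x ⊓ fixM v Mv) ≠ 3 := by
      intro h3
      have heq : Bl x ⊓ fixM v Mv = Bl x :=
        Submodule.eq_of_le_of_finrank_eq inf_le_left (by rw [h3, hBl3 x])
      have hxF : x.1 ∈ fixM v Mv := by
        have hm : x.1 ∈ Bl x ⊓ fixM v Mv := by rw [heq]; exact hxBl x
        exact (Submodule.mem_inf.mp hm).2
      rw [mem_fixM] at hxF
      exact x.2 hxF
    omega
  have hBlcard : ∀ x : {x : BinVec v // ¬ L x = x},
      Nat.card {Q : Submodule (ZMod 2) (BinVec v) //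
        Module.finrank (ZMod 2) Q = 1 ∧ Q ≤ Bl x ∧ subApply v Mv Q = Q} = 3 := by
    intro x
    rw [card_lines Mv hM2 (Bl x), hBlinter x]
    norm_num
  -- the map from non-fixed vectors to blocks
  let ψ : {x : BinVec v // ¬ L x = x} →
      {B : Submodule (ZMod 2) (BinVec v) // B ∈ D ∧ subApply v Mv B = B ∧
        Nat.card {P : Submodule (ZMod 2) (BinVec v) //
          Module.finrank (ZMod 2) P = 1 ∧ P ≤ B ∧ subApply v Mv P = P} = 3} :=
    fun x => ⟨Bl x, (hBl x).1.1, hBlfix x, hBlcard x⟩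
  -- each fiber has cardinality 4
  have hfibercard : ∀ b : {B : Submodule (ZMod 2) (BinVec v) // B ∈ D ∧
      subApply v Mv B = B ∧ Nat.card {P : Submodule (ZMod 2) (BinVec v) //
        Module.finrank (ZMod 2) P = 1 ∧ P ≤ B ∧ subApply v Mv P = P} = 3},
      Nat.card {x : {x : BinVec v // ¬ L x = x} // ψ x = b} = 4 := by
    intro b
    have hB0fix : Submodule.map L b.1 = b.1 := b.2.2.1
    have hmemLB : ∀ y ∈ b.1, L y ∈ b.1 := by
      intro y hy
      have h : L y ∈ Submodule.map L b.1 := Submodule.mem_map_of_mem hy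
      rwa [hB0fix] at h
    have e : {x : {x : BinVec v // ¬ L x = x} // ψ x = b}
        ≃ {y : ↥(b.1) // ¬ (L (y : BinVec v) = (y : BinVec v))} :=
      { toFun := fun x => ⟨⟨x.1.1, by
          have h : Bl x.1 = b.1 := congrArg Subtype.val x.2
          rw [← h]; exact hxBl x.1⟩, x.1.2⟩
        invFun := fun y => ⟨⟨(y.1 : BinVec v), y.2⟩, by
          apply Subtype.ext
          show Bl ⟨(y.1 : BinVec v), y.2⟩ = b.1
          refine ((hBl ⟨(y.1 : BinVec v), y.2⟩).2 b.1 ⟨b.2.1, ?_⟩).symm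
          rw [Submodule.span_le, Set.insert_subset_iff, Set.singleton_subset_iff]
          exact ⟨y.1.2, hmemLB _ y.1.2⟩⟩
        left_inv := fun x => by
          apply Subtype.ext; apply Subtype.ext; rfl
        right_inv := fun y => by
          apply Subtype.ext; apply Subtype.ext; rfl }
    rw [Nat.card_congr e, nat_card_compl_sub (fun y : ↥(b.1) => L (y : BinVec v) = (y : BinVec v))]
    have hb3 : Module.finrank (ZMod 2) b.1 = 3 := hD.1 b.1 b.2.1
    have hcardB : Nat.card ↥(b.1) = 8 := by
      rw [nat_card_submodule, hb3]
      norm_num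
    have hinter : Module.finrank (ZMod 2) ↥(b.1 ⊓ fixM v Mv) = 2 := by
      have hcl := card_lines Mv hM2 b.1
      rw [b.2.2.2] at hcl
      have h1 : 1 ≤ 2 ^ Module.finrank (ZMod 2) ↥(b.1 ⊓ fixM v Mv) :=
        Nat.one_le_two_pow
      have h4 : 2 ^ Module.finrank (ZMod 2) ↥(b.1 ⊓ fixM v Mv) = 2 ^ 2 := by omega
      exact Nat.pow_right_injective (by norm_num) h4
    have hfixcard : Nat.card {y : ↥(b.1) // L (y : BinVec v) = (y : BinVec v)} = 4 := by
      have e2 : {y : ↥(b.1) // L (y : BinVec v) = (y : BinVec v)} ≃ ↥(b.1 ⊓ fixM v Mv) :=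
        { toFun := fun y => ⟨(y.1 : BinVec v), Submodule.mem_inf.mpr ⟨y.1.2, mem_fixM.mpr (by
            exact y.2)⟩⟩
          invFun := fun z => ⟨⟨(z : BinVec v), (Submodule.mem_inf.mp z.2).1⟩, by
            show L (z : BinVec v) = (z : BinVec v)
            have h := (Submodule.mem_inf.mp z.2).2
            rw [mem_fixM] at h
            exact h⟩
          left_inv := fun y => by apply Subtype.ext; apply Subtype.ext; rfl
          right_inv := fun z => by apply Subtype.ext; rfl }
      rw [Nat.card_congr e2, nat_card_submodule, hinter]
      norm_num
    rw [hcardB, hfixcard]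
  -- finiteness
  haveI hfinsub : Finite (Submodule (ZMod 2) (BinVec v)) :=
    Finite.of_injective (fun W : Submodule (ZMod 2) (BinVec v) => (W : Set (BinVec v)))
      SetLike.coe_injective
  -- summing over the fibers
  have hXsum : Nat.card {x : BinVec v // ¬ L x = x}
      = 4 * Nat.card {B : Submodule (ZMod 2) (BinVec v) // B ∈ D ∧
        subApply v Mv B = B ∧ Nat.card {P : Submodule (ZMod 2) (BinVec v) //
          Module.finrank (ZMod 2) P = 1 ∧ P ≤ B ∧ subApply v Mv P = P} = 3} := by
    haveI : Fintype {B : Submodule (ZMod 2) (BinVec v) // B ∈ D ∧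
        subApply v Mv B = B ∧ Nat.card {P : Submodule (ZMod 2) (BinVec v) //
          Module.finrank (ZMod 2) P = 1 ∧ P ≤ B ∧ subApply v Mv P = P} = 3} :=
      Fintype.ofFinite _
    haveI : ∀ b, Fintype {x : {x : BinVec v // ¬ L x = x} // ψ x = b} :=
      fun b => Fintype.ofFinite _
    calc Nat.card {x : BinVec v // ¬ L x = x}
        = Nat.card ((b : _) × {x : {x : BinVec v // ¬ L x = x} // ψ x = b}) :=
          (Nat.card_congr (Equiv.sigmaFiberEquiv ψ)).symm
      _ = Fintype.card ((b : _) × {x : {x : BinVec v // ¬ L x = x} // ψ x = b}) :=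
          Nat.card_eq_fintype_card
      _ = ∑ b, Fintype.card {x : {x : BinVec v // ¬ L x = x} // ψ x = b} :=
          Fintype.card_sigma
      _ = ∑ b, 4 := Finset.sum_congr rfl (fun b _ => by
          rw [← Nat.card_eq_fintype_card]; exact hfibercard b)
      _ = _ := by
          rw [Finset.sum_const, smul_eq_mul, Finset.card_univ, Nat.card_eq_fintype_card, mul_comm]
  -- the number of non-fixed vectors
  have hcardX : Nat.card {x : BinVec v // ¬ L x = x} = 2 ^ v - 2 ^ (v - s) := by
    rw [nat_card_compl_sub (fun x : BinVec v => L x = x)]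
    have h1 : Nat.card (BinVec v) = 2 ^ v := by
      rw [Nat.card_eq_fintype_card, Fintype.card_fun, ZMod.card, Fintype.card_fin]
    have e3 : {x : BinVec v // L x = x} ≃ ↥(fixM v Mv) :=
      Equiv.subtypeEquivRight (fun x => by
        rw [mem_fixM]
        exact Iff.rfl)
    have h2 : Nat.card {x : BinVec v // L x = x} = 2 ^ (v - s) := by
      rw [Nat.card_congr e3, nat_card_submodule, hFrank]
    rw [h1, h2]
  -- final arithmetic
  apply Nat.eq_of_mul_eq_mul_left (show 0 < 4 by norm_num)
  rw [← hXsum, hcardX]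
  obtain ⟨u, hu⟩ : ∃ u, 2 ^ s = u + 1 := ⟨2 ^ s - 1, by
    have := Nat.one_le_two_pow (n := s); omega⟩
  have e1 : (2:ℕ) ^ v = 2 ^ (v - s - 2) * (4 * 2 ^ s) := by
    rw [show (4:ℕ) * 2 ^ s = 2 ^ (s + 2) by rw [pow_add]; ring, ← pow_add]
    congr 1
    omega
  have e2 : (2:ℕ) ^ (v - s) = 2 ^ (v - s - 2) * 4 := by
    rw [show (4:ℕ) = 2 ^ 2 from rfl, ← pow_add]
    congr 1
    omega
  rw [e1, e2, hu]
  have e4 : 2 ^ (v - s - 2) * (4 * (u + 1))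
      = 4 * (2 ^ (v - s - 2) * u) + 2 ^ (v - s - 2) * 4 := by ring
  rw [e4, Nat.add_sub_cancel, Nat.add_sub_cancel]
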